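/- (Theorem 5, general form) Let s be a random defect pattern with parameter β, and independently let each coordinate of {1,…,n} be erased with probability α ∈ [0,1], with E the random erased set. Let t ∈ 𝔽₂ⁿ be an arbitrary fixed vector and let b ∈ 𝔽₂^{U(s)} be defined by bᵢ = tᵢ + sᵢ for i ∈ U(s). Let C ⊆ 𝔽₂ⁿ be a linear code with minimum distance d₁ and weight distribution A_w. Then the probability that (the linear system G₀^{U(s)} d = b has no solution d ∈ 𝔽₂ˡ) or (there exists a nonzero c ∈ C with supp(c) ⊆ E) is at most Σ_{u=d₀}^{n} β^{u}(1−β)^{n−u} Σ_{w=d₀}^{u} B₀,w · C(n−w, u−w) + Σ_{e=d₁}^{n} α^{e}(1−α)^{n−e} Σ_{w=d₁}^{e} A_w · C(n−w, e−w). -/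
import Mathlib


open scoped Classical

/-- The support of a binary vector: the set of coordinates where it is nonzero. -/
def supp {n : ℕ} (c : Fin n → ZMod 2) : Finset (Fin n) :=
  Finset.univ.filter fun i => c i ≠ 0

/-- The Hamming weight of a binary vector. -/
def wt {n : ℕ} (c : Fin n → ZMod 2) : ℕ := (supp c).card

/-- A defect pattern is `s : Fin n → Option (ZMod 2)`, where `s i = none` means cell `i`
is normal (`λ`) and `s i = some v` means cell `i` is stuck at value `v`.
`defectWt β s` is the probability of the pattern `s` when the cells are i.i.d. with
`P(sᵢ = 0) = P(sᵢ = 1) = β/2` and `P(sᵢ = λ) = 1 - β`. -/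
noncomputable def defectWt (n : ℕ) (β : ℝ) (s : Fin n → Option (ZMod 2)) : ℝ :=
  ∏ i, if s i = none then 1 - β else β / 2

/-- An erasure pattern is `e : Fin n → Bool` (`true` = erased).  `eraseWt α e` is the
probability of the pattern `e` when coordinates are erased i.i.d. with probability `α`. -/
noncomputable def eraseWt (n : ℕ) (α : ℝ) (e : Fin n → Bool) : ℝ :=
  ∏ i, if e i then α else 1 - α

lemma aux_sum_prod_indicator {n : ℕ} {X : Type*} [Fintype X]
    (W : X → ℝ) (P : X → Prop) (T : Finset (Fin n))
    (hW : ∑ x, W x = 1) :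
    ∑ s : Fin n → X, (if ∀ i ∈ T, P (s i) then ∏ i, W (s i) else 0)
      = (∑ x, if P x then W x else 0) ^ T.card := by
  have h1 : ∀ s : Fin n → X, (if ∀ i ∈ T, P (s i) then ∏ i, W (s i) else 0)
      = ∏ i, (if i ∈ T then (if P (s i) then W (s i) else 0) else W (s i)) := by
    intro s
    by_cases h : ∀ i ∈ T, P (s i)
    · rw [if_pos h]
      refine Finset.prod_congr rfl fun i _ => ?_
      by_cases hi : i ∈ T
      · simp [hi, h i hi]
      · simp [hi]
    · rw [if_neg h]
      push_neg at h
      obtain ⟨i, hiT, hiP⟩ := h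
      exact (Finset.prod_eq_zero (Finset.mem_univ i) (by simp [hiT, hiP])).symm
  simp_rw [h1]
  have h2 : ∑ s : Fin n → X,
      ∏ i, (if i ∈ T then (if P (s i) then W (s i) else 0) else W (s i))
      = ∏ i, ∑ x : X, (if i ∈ T then (if P x then W x else 0) else W x) := by
    rw [Finset.prod_univ_sum]
    rw [← Fintype.piFinset_univ]
  rw [h2]
  have h3 : ∀ i : Fin n, (∑ x : X, if i ∈ T then (if P x then W x else 0) else W x)
      = if i ∈ T then (∑ x : X, if P x then W x else 0) else 1 := by
    intro i
    by_cases hi : i ∈ T <;> simp [hi, hW]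
  simp_rw [h3]
  rw [Finset.prod_ite_mem, Finset.univ_inter, Finset.prod_const]

lemma aux_defect (n : ℕ) (β : ℝ) (c : Fin n → ZMod 2) :
    ∑ s : Fin n → Option (ZMod 2),
      (if supp c ⊆ Finset.univ.filter (fun i => s i ≠ none) then defectWt n β s else 0)
      = β ^ wt c := by
  have := aux_sum_prod_indicator (n := n)
    (fun x : Option (ZMod 2) => if x = none then 1 - β else β / 2)
    (fun x => x ≠ none) (supp c) (by simp [Fintype.sum_option]; ring)
  have hcond : ∀ s : Fin n → Option (ZMod 2),
      (supp c ⊆ Finset.univ.filter (fun i => s i ≠ none)) ↔ ∀ i ∈ supp c, s i ≠ none := by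
    intro s; constructor
    · intro h i hi; simpa using h hi
    · intro h i hi; simpa using h i hi
  beta_reduce at this
  refine Eq.trans ?_ (this.trans ?_)
  · refine Finset.sum_congr rfl fun s _ => ?_
    congr 1
    · exact propext (hcond s)
  congr 1
  simp [Fintype.sum_option]
  ring

lemma aux_erase (n : ℕ) (α : ℝ) (c : Fin n → ZMod 2) :
    ∑ e : Fin n → Bool,
      (if supp c ⊆ Finset.univ.filter (fun i => e i = true) then eraseWt n α e else 0)
      = α ^ wt c := by
  have := aux_sum_prod_indicator (n := n)
    (fun x : Bool => if x then α else 1 - α)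
    (fun x => x = true) (supp c) (by simp)
  have hcond : ∀ e : Fin n → Bool,
      (supp c ⊆ Finset.univ.filter (fun i => e i = true)) ↔ ∀ i ∈ supp c, e i = true := by
    intro e; constructor
    · intro h i hi; simpa using h hi
    · intro h i hi; simpa using h i hi
  beta_reduce at this
  refine Eq.trans ?_ (this.trans ?_)
  · refine Finset.sum_congr rfl fun s _ => ?_
    congr 1
    · exact propext (hcond s)
  congr 1
  simp

lemma wt_zero (n : ℕ) : wt (0 : Fin n → ZMod 2) = 0 := by
  simp [wt, supp]

lemma supp_zero (n : ℕ) : supp (0 : Fin n → ZMod 2) = ∅ := by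
  simp [supp]

lemma wt_eq_zero_iff {n : ℕ} {c : Fin n → ZMod 2} : wt c = 0 ↔ c = 0 := by
  simp only [wt, supp, Finset.card_eq_zero, Finset.filter_eq_empty_iff, Finset.mem_univ,
    not_not, funext_iff]
  simp

lemma sum_defectWt (n : ℕ) (β : ℝ) : ∑ s : Fin n → Option (ZMod 2), defectWt n β s = 1 := by
  have := aux_defect n β 0
  simpa [supp_zero, wt_zero] using this

lemma sum_eraseWt (n : ℕ) (α : ℝ) : ∑ e : Fin n → Bool, eraseWt n α e = 1 := by
  have := aux_erase n α 0
  simpa [supp_zero, wt_zero] using this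

lemma defectWt_nonneg {n : ℕ} {β : ℝ} (h0 : 0 ≤ β) (h1 : β ≤ 1)
    (s : Fin n → Option (ZMod 2)) : 0 ≤ defectWt n β s := by
  apply Finset.prod_nonneg
  intro i _
  split <;> linarith

lemma eraseWt_nonneg {n : ℕ} {α : ℝ} (h0 : 0 ≤ α) (h1 : α ≤ 1)
    (e : Fin n → Bool) : 0 ≤ eraseWt n α e := by
  apply Finset.prod_nonneg
  intro i _
  split <;> linarith

lemma union_bound {ι V : Type*} [Fintype ι] (D : Finset V) (Q : V → ι → Prop)
    (w : ι → ℝ) (hw : ∀ s, 0 ≤ w s) :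
    ∑ s, (if ∃ c ∈ D, Q c s then w s else 0) ≤ ∑ c ∈ D, ∑ s, (if Q c s then w s else 0) := by
  rw [Finset.sum_comm]
  apply Finset.sum_le_sum
  intro s _
  have hnn : ∀ c : V, (0:ℝ) ≤ (if Q c s then w s else 0) := by
    intro c; split
    · exact hw s
    · exact le_refl 0
  by_cases h : ∃ c ∈ D, Q c s
  · obtain ⟨c, hc, hq⟩ := h
    rw [if_pos ⟨c, hc, hq⟩]
    calc w s = (if Q c s then w s else 0) := (if_pos hq).symm
      _ ≤ ∑ c ∈ D, (if Q c s then w s else 0) :=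
        Finset.single_le_sum (fun c _ => hnn c) hc
  · rw [if_neg h]
    exact Finset.sum_nonneg fun c _ => hnn c

lemma group_by_weight {n : ℕ} (D : Finset (Fin n → ZMod 2)) (x : ℝ) (d : ℕ)
    (hd : ∀ c ∈ D, d ≤ wt c) (N : ℕ → ℕ)
    (hN : ∀ w ∈ Finset.Icc d n, ((D.filter (fun c => wt c = w)).card : ℝ) = N w) :
    ∑ c ∈ D, x ^ wt c = ∑ w ∈ Finset.Icc d n, (N w : ℝ) * x ^ w := by
  have hmaps : ∀ c ∈ D, wt c ∈ Finset.Icc d n := by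
    intro c hc
    rw [Finset.mem_Icc]
    refine ⟨hd c hc, ?_⟩
    calc wt c ≤ Fintype.card (Fin n) := Finset.card_le_univ _
      _ = n := Fintype.card_fin n
  rw [← Finset.sum_fiberwise_of_maps_to hmaps]
  apply Finset.sum_congr rfl
  intro w hw
  rw [Finset.sum_congr rfl (fun c hc => by
    rw [(Finset.mem_filter.mp hc).2]), Finset.sum_const, ← hN w hw, nsmul_eq_mul]

lemma inner_binomial (n w : ℕ) (hw : w ≤ n) (x : ℝ) :
    ∑ u ∈ Finset.Icc w n, x ^ u * (1 - x) ^ (n - u) * ((n - w).choose (u - w) : ℝ)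
      = x ^ w := by
  rw [← Finset.Ico_add_one_right_eq_Icc, Finset.sum_Ico_eq_sum_range]
  have hn : n + 1 - w = (n - w) + 1 := by omega
  rw [hn]
  have : ∀ j ∈ Finset.range ((n - w) + 1),
      x ^ (w + j) * (1 - x) ^ (n - (w + j)) * ((n - w).choose ((w + j) - w) : ℝ)
        = x ^ w * (x ^ j * (1 - x) ^ ((n - w) - j) * ((n - w).choose j : ℝ)) := by
    intro j hj
    have h1 : (w + j) - w = j := by omega
    have h2 : n - (w + j) = (n - w) - j := by omega
    rw [h1, h2, pow_add]
    ring
  rw [Finset.sum_congr rfl this, ← Finset.mul_sum]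
  have hb := add_pow x (1 - x) (n - w)
  simp only [add_sub_cancel, one_pow] at hb
  rw [← hb]
  norm_num

lemma rhs_eval (n d : ℕ) (x : ℝ) (N : ℕ → ℕ) :
    ∑ u ∈ Finset.Icc d n, x ^ u * (1 - x) ^ (n - u) *
      ∑ w ∈ Finset.Icc d u, (N w : ℝ) * ((n - w).choose (u - w) : ℝ)
    = ∑ w ∈ Finset.Icc d n, (N w : ℝ) * x ^ w := by
  simp_rw [Finset.mul_sum]
  rw [← Finset.Ico_add_one_right_eq_Icc]
  have hIcc : ∀ u ∈ Finset.Ico d (n + 1), Finset.Icc d u = Finset.Ico d (u + 1) := by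
    intro u _; rw [Finset.Ico_add_one_right_eq_Icc]
  calc ∑ u ∈ Finset.Ico d (n+1), ∑ w ∈ Finset.Icc d u,
        x ^ u * (1 - x) ^ (n - u) * ((N w : ℝ) * ((n - w).choose (u - w) : ℝ))
      = ∑ u ∈ Finset.Ico d (n+1), ∑ w ∈ Finset.Ico d (u+1),
        x ^ u * (1 - x) ^ (n - u) * ((N w : ℝ) * ((n - w).choose (u - w) : ℝ)) := by
        exact Finset.sum_congr rfl fun u hu => by rw [hIcc u hu]
    _ = ∑ w ∈ Finset.Ico d (n+1), ∑ u ∈ Finset.Ico w (n+1),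
        x ^ u * (1 - x) ^ (n - u) * ((N w : ℝ) * ((n - w).choose (u - w) : ℝ)) := by
        rw [← Finset.sum_Ico_Ico_comm]
    _ = ∑ w ∈ Finset.Ico d (n+1), (N w : ℝ) *
        ∑ u ∈ Finset.Icc w n, x ^ u * (1 - x) ^ (n - u) * ((n - w).choose (u - w) : ℝ) := by
        refine Finset.sum_congr rfl fun w _ => ?_
        rw [Finset.mul_sum, ← Finset.Ico_add_one_right_eq_Icc]
        exact Finset.sum_congr rfl fun u _ => by ring
    _ = ∑ w ∈ Finset.Ico d (n+1), (N w : ℝ) * x ^ w := by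
        refine Finset.sum_congr rfl fun w hw => ?_
        rw [inner_binomial n w (by simp at hw; omega) x]

lemma no_sol_dual {n l : ℕ} (G₀ : Matrix (Fin n) (Fin l) (ZMod 2)) (t : Fin n → ZMod 2)
    (s : Fin n → Option (ZMod 2))
    (h : ¬ ∃ d : Fin l → ZMod 2, ∀ i, ∀ v : ZMod 2, s i = some v → G₀.mulVec d i = t i + v) :
    ∃ c : Fin n → ZMod 2, Matrix.vecMul c G₀ = 0 ∧ c ≠ 0 ∧
      supp c ⊆ Finset.univ.filter fun i => s i ≠ none := by
  classical
  let b : Fin n → ZMod 2 := fun i => t i + (s i).getD 0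
  let W : Submodule (ZMod 2) (Fin n → ZMod 2) :=
    { carrier := {y | ∀ i, s i ≠ none → y i = 0}
      add_mem' := fun {a₁ a₂} ha hb i hi => by
        rw [Pi.add_apply, ha i hi, hb i hi, add_zero]
      zero_mem' := fun i _ => rfl
      smul_mem' := fun r y hy i hi => by rw [Pi.smul_apply, hy i hi, smul_zero] }
  let p : Submodule (ZMod 2) (Fin n → ZMod 2) := LinearMap.range G₀.mulVecLin ⊔ W
  have hWp : ∀ y ∈ W, y ∈ p := fun y hy => Submodule.mem_sup_right hy
  have hbp : b ∉ p := by
    intro hbp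
    rw [Submodule.mem_sup] at hbp
    obtain ⟨y, hy, z, hz, hsum⟩ := hbp
    obtain ⟨d, rfl⟩ := hy
    refine h ⟨d, fun i v hv => ?_⟩
    have h1 : G₀.mulVecLin d i + z i = b i := congrFun hsum i
    have hz' : z i = 0 := hz i (by rw [hv]; exact Option.some_ne_none v)
    have hb' : b i = t i + v := by show t i + (s i).getD 0 = t i + v; rw [hv]; rfl
    rw [hz', add_zero] at h1
    rw [show G₀.mulVec d = G₀.mulVecLin d from rfl, h1, hb']
  have hq : (Submodule.Quotient.mk b : (Fin n → ZMod 2) ⧸ p) ≠ 0 := by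
    simpa [Submodule.Quotient.mk_eq_zero] using hbp
  obtain ⟨φ, hφ⟩ : ∃ φ : Module.Dual (ZMod 2) ((Fin n → ZMod 2) ⧸ p),
      φ (Submodule.Quotient.mk b) ≠ 0 := by
    by_contra hc
    push_neg at hc
    exact hq ((Module.forall_dual_apply_eq_zero_iff (ZMod 2) _).mp hc)
  let f : (Fin n → ZMod 2) →ₗ[ZMod 2] ZMod 2 := φ.comp p.mkQ
  have hf0 : ∀ y ∈ p, f y = 0 := by
    intro y hy
    have h2 : p.mkQ y = 0 := by
      rw [Submodule.mkQ_apply, Submodule.Quotient.mk_eq_zero]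
      exact hy
    show φ (p.mkQ y) = 0
    rw [h2, map_zero]
  have hfb : f b ≠ 0 := hφ
  let c : Fin n → ZMod 2 := fun i => f (Pi.single i 1)
  have hrep : ∀ x : Fin n → ZMod 2, f x = ∑ i, x i * c i := by
    intro x
    have hx : f x = f (∑ i, Pi.single i (x i)) := by rw [Finset.univ_sum_single x]
    rw [hx, map_sum]
    refine Finset.sum_congr rfl fun i _ => ?_
    have hsingle : Pi.single i (x i) = x i • (Pi.single i 1 : Fin n → ZMod 2) := by
      rw [← Pi.single_smul, smul_eq_mul, mul_one]
    rw [hsingle, map_smul, smul_eq_mul]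
  refine ⟨c, ?_, ?_, ?_⟩
  · funext j
    have hmem : G₀.mulVecLin (Pi.single j 1) ∈ p :=
      Submodule.mem_sup_left (LinearMap.mem_range.mpr ⟨Pi.single j 1, rfl⟩)
    have h0 := hf0 _ hmem
    rw [hrep] at h0
    have heq : Matrix.vecMul c G₀ j = ∑ i, G₀.mulVecLin (Pi.single j (1 : ZMod 2)) i * c i := by
      rw [Matrix.mulVecLin_apply, Matrix.mulVec_single_one]
      simp only [Matrix.vecMul, dotProduct, Matrix.transpose_apply]
      exact Finset.sum_congr rfl fun i _ => mul_comm _ _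
    rw [heq, h0]
    rfl
  · intro hc0
    apply hfb
    rw [hrep]
    refine Finset.sum_eq_zero fun i _ => ?_
    rw [show c i = 0 from congrFun hc0 i, mul_zero]
  · intro i hi
    simp only [supp, Finset.mem_filter, Finset.mem_univ, true_and] at hi ⊢
    intro hnone
    apply hi
    have hmem : (Pi.single i 1 : Fin n → ZMod 2) ∈ p := by
      apply hWp
      intro j hj
      by_cases hij : j = i
      · exact absurd (hij ▸ hnone) hj
      · exact Pi.single_eq_of_ne hij 1
    exact hf0 _ hmem

lemma ite_congr' {α : Sort*} {p q : Prop} {h1 : Decidable p} {h2 : Decidable q} {a b : α}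
    (hpq : p ↔ q) : (@ite α p h1 a b) = (@ite α q h2 a b) := by
  congr 1
  exact propext hpq

theorem stmt13 (n l : ℕ) (G₀ : Matrix (Fin n) (Fin l) (ZMod 2)) (d₀ : ℕ)
    (hdual : ∃ c : Fin n → ZMod 2, Matrix.vecMul c G₀ = 0 ∧ c ≠ 0)
    (hd₀ : IsLeast
      {w : ℕ | ∃ c : Fin n → ZMod 2, Matrix.vecMul c G₀ = 0 ∧ c ≠ 0 ∧ wt c = w} d₀)
    (B : ℕ → ℕ)
    (hB : ∀ w, (B w : ℕ) =
      {c : Fin n → ZMod 2 | Matrix.vecMul c G₀ = 0 ∧ wt c = w}.ncard)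
    (C : Submodule (ZMod 2) (Fin n → ZMod 2)) (d₁ : ℕ)
    (hC : ∃ c ∈ C, c ≠ 0)
    (hd₁ : IsLeast {w : ℕ | ∃ c ∈ C, c ≠ 0 ∧ wt c = w} d₁)
    (A : ℕ → ℕ)
    (hA : ∀ w, A w = {c : Fin n → ZMod 2 | c ∈ C ∧ wt c = w}.ncard)
    (β : ℝ) (hβ₀ : 0 < β) (hβ₁ : β < 1)
    (α : ℝ) (hα₀ : 0 ≤ α) (hα₁ : α ≤ 1)
    (t : Fin n → ZMod 2) :
    (∑ s : Fin n → Option (ZMod 2), ∑ e : Fin n → Bool,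
      if (¬ ∃ d : Fin l → ZMod 2,
            ∀ i, ∀ v : ZMod 2, s i = some v → G₀.mulVec d i = t i + v)
          ∨ (∃ c ∈ C, c ≠ 0 ∧ supp c ⊆ Finset.univ.filter (fun i => e i = true))
      then defectWt n β s * eraseWt n α e else 0)
    ≤ (∑ u ∈ Finset.Icc d₀ n, β ^ u * (1 - β) ^ (n - u) *
        ∑ w ∈ Finset.Icc d₀ u, (B w : ℝ) * ((n - w).choose (u - w) : ℝ))
      + ∑ k ∈ Finset.Icc d₁ n, α ^ k * (1 - α) ^ (n - k) *
        ∑ w ∈ Finset.Icc d₁ k, (A w : ℝ) * ((n - w).choose (k - w) : ℝ) := by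
  classical
  have hws : ∀ s, 0 ≤ defectWt n β s := defectWt_nonneg hβ₀.le hβ₁.le
  have hwe : ∀ e, 0 ≤ eraseWt n α e := eraseWt_nonneg hα₀ hα₁
  set P : (Fin n → Option (ZMod 2)) → Prop := fun s =>
    ¬ ∃ d : Fin l → ZMod 2, ∀ i, ∀ v : ZMod 2, s i = some v → G₀.mulVec d i = t i + v
    with hP_def
  set Q : (Fin n → Bool) → Prop := fun e =>
    ∃ c ∈ C, c ≠ 0 ∧ supp c ⊆ Finset.univ.filter (fun i => e i = true) with hQ_def
  -- Step 1: split the union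
  have step1 : (∑ s : Fin n → Option (ZMod 2), ∑ e : Fin n → Bool,
      if P s ∨ Q e then defectWt n β s * eraseWt n α e else 0)
      ≤ (∑ s : Fin n → Option (ZMod 2), if P s then defectWt n β s else 0)
        + (∑ e : Fin n → Bool, if Q e then eraseWt n α e else 0) := by
    have hle : ∀ s e, (if P s ∨ Q e then defectWt n β s * eraseWt n α e else 0)
        ≤ (if P s then defectWt n β s else 0) * eraseWt n α e
          + defectWt n β s * (if Q e then eraseWt n α e else 0) := by
      intro s e
      by_cases hP : P s
      · by_cases hQ : Q e
        · rw [if_pos (Or.inl hP), if_pos hP, if_pos hQ]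
          exact le_add_of_nonneg_right (mul_nonneg (hws s) (hwe e))
        · rw [if_pos (Or.inl hP), if_pos hP, if_neg hQ, mul_zero, add_zero]
      · by_cases hQ : Q e
        · rw [if_pos (Or.inr hQ), if_neg hP, if_pos hQ, zero_mul, zero_add]
        · rw [if_neg (not_or.mpr ⟨hP, hQ⟩), if_neg hP, if_neg hQ, zero_mul, mul_zero, add_zero]
    calc (∑ s : Fin n → Option (ZMod 2), ∑ e : Fin n → Bool,
        if P s ∨ Q e then defectWt n β s * eraseWt n α e else 0)
        ≤ ∑ s : Fin n → Option (ZMod 2), ∑ e : Fin n → Bool,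
            ((if P s then defectWt n β s else 0) * eraseWt n α e
              + defectWt n β s * (if Q e then eraseWt n α e else 0)) :=
          Finset.sum_le_sum fun s _ => Finset.sum_le_sum fun e _ => hle s e
      _ = (∑ s : Fin n → Option (ZMod 2), if P s then defectWt n β s else 0)
          + (∑ e : Fin n → Bool, if Q e then eraseWt n α e else 0) := by
          simp_rw [Finset.sum_add_distrib, ← Finset.mul_sum, ← Finset.sum_mul,
            sum_eraseWt, sum_defectWt, mul_one, one_mul]
  refine le_trans step1 (add_le_add ?_ ?_)
  -- first term
  · have hd₀1 : 1 ≤ d₀ := by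
      obtain ⟨c, hc1, hc2, hc3⟩ := hd₀.1
      rcases Nat.eq_zero_or_pos d₀ with h0 | h1
      · exact absurd (wt_eq_zero_iff.mp (h0 ▸ hc3)) hc2
      · exact h1
    set D₀ : Finset (Fin n → ZMod 2) :=
      Finset.univ.filter (fun c => Matrix.vecMul c G₀ = 0 ∧ c ≠ 0) with hD₀
    refine le_trans (le_trans ?_ (union_bound D₀
      (fun c s => supp c ⊆ Finset.univ.filter (fun i => s i ≠ none))
      (defectWt n β) hws)) ?_
    · refine Finset.sum_le_sum fun s _ => ?_
      by_cases hP : P s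
      · obtain ⟨c, h1, h2, h3⟩ := no_sol_dual G₀ t s hP
        rw [if_pos hP, if_pos ⟨c, Finset.mem_filter.mpr ⟨Finset.mem_univ c, h1, h2⟩, h3⟩]
      · rw [if_neg hP]
        split
        · exact hws s
        · exact le_refl 0
    refine le_trans (le_of_eq (Finset.sum_congr rfl fun c hc => Eq.trans
      (Finset.sum_congr rfl fun s _ => ite_congr' Iff.rfl) (aux_defect n β c))) ?_
    have hlow : ∀ c ∈ D₀, d₀ ≤ wt c := by
      intro c hc
      rw [hD₀, Finset.mem_filter] at hc
      exact hd₀.2 ⟨c, hc.2.1, hc.2.2, rfl⟩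
    have hcard : ∀ w ∈ Finset.Icc d₀ n,
        ((D₀.filter (fun c => wt c = w)).card : ℝ) = B w := by
      intro w hw
      have hw1 : 1 ≤ w := le_trans hd₀1 (Finset.mem_Icc.mp hw).1
      have hset : {c : Fin n → ZMod 2 | Matrix.vecMul c G₀ = 0 ∧ wt c = w}
          = ↑(D₀.filter (fun c => wt c = w)) := by
        ext c
        simp only [Set.mem_setOf_eq, Finset.coe_filter, hD₀, Finset.mem_filter,
          Finset.mem_univ, true_and]
        constructor
        · rintro ⟨h1, h2⟩
          refine ⟨⟨h1, ?_⟩, h2⟩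
          intro hc0
          rw [hc0, wt_zero] at h2
          omega
        · rintro ⟨⟨h1, _⟩, h2⟩
          exact ⟨h1, h2⟩
      rw [hB w, hset, Set.ncard_coe_finset]
    exact le_of_eq ((group_by_weight D₀ β d₀ hlow B hcard).trans (rhs_eval n d₀ β B).symm)
  -- second term
  · have hd₁1 : 1 ≤ d₁ := by
      obtain ⟨c, hc1, hc2, hc3⟩ := hd₁.1
      rcases Nat.eq_zero_or_pos d₁ with h0 | h1
      · exact absurd (wt_eq_zero_iff.mp (h0 ▸ hc3)) hc2
      · exact h1
    set D₁ : Finset (Fin n → ZMod 2) :=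
      Finset.univ.filter (fun c => c ∈ C ∧ c ≠ 0) with hD₁
    refine le_trans (le_trans ?_ (union_bound D₁
      (fun c e => supp c ⊆ Finset.univ.filter (fun i => e i = true))
      (eraseWt n α) hwe)) ?_
    · refine Finset.sum_le_sum fun e _ => ?_
      by_cases hQ : Q e
      · rw [if_pos hQ]
        obtain ⟨c, h1, h2, h3⟩ := hQ
        rw [if_pos ⟨c, Finset.mem_filter.mpr ⟨Finset.mem_univ c, h1, h2⟩, h3⟩]
      · rw [if_neg hQ]
        split
        · exact hwe e
        · exact le_refl 0
    refine le_trans (le_of_eq (Finset.sum_congr rfl fun c hc => Eq.trans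
      (Finset.sum_congr rfl fun e _ => ite_congr' Iff.rfl) (aux_erase n α c))) ?_
    have hlow : ∀ c ∈ D₁, d₁ ≤ wt c := by
      intro c hc
      rw [hD₁, Finset.mem_filter] at hc
      exact hd₁.2 ⟨c, hc.2.1, hc.2.2, rfl⟩
    have hcard : ∀ w ∈ Finset.Icc d₁ n,
        ((D₁.filter (fun c => wt c = w)).card : ℝ) = A w := by
      intro w hw
      have hw1 : 1 ≤ w := le_trans hd₁1 (Finset.mem_Icc.mp hw).1
      have hset : {c : Fin n → ZMod 2 | c ∈ C ∧ wt c = w}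
          = ↑(D₁.filter (fun c => wt c = w)) := by
        ext c
        simp only [Set.mem_setOf_eq, Finset.coe_filter, hD₁, Finset.mem_filter,
          Finset.mem_univ, true_and]
        constructor
        · rintro ⟨h1, h2⟩
          refine ⟨⟨h1, ?_⟩, h2⟩
          intro hc0
          rw [hc0, wt_zero] at h2
          omega
        · rintro ⟨⟨h1, _⟩, h2⟩
          exact ⟨h1, h2⟩
      rw [hA w, hset, Set.ncard_coe_finset]
    exact le_of_eq ((group_by_weight D₁ α d₁ hlow A hcard).trans (rhs_eval n d₁ α A).symm)
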